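/- Directly applying the Top Trading Cycle algorithm to a barter exchange network is not incentive compatible with respect to invitations. Concretely: consider the line network with organizer o and agents 1,2,3, with edges o–1, 1–2, 2–3, where each agent i owns good g_i, and the preferences are g3 ≻₁ g2 ≻₁ g1 for agent 1, g1 ≻₂ g3 ≻₂ g2 for agent 2, and g1 ≻₃ g2 ≻₃ g3 for agent 3. When all three agents participate and TTC is run on all goods, agents 1 and 3 form the unique top trading cycle, so agent 2 receives her own good g2. If instead agent 2 does not invite agent 3 (so only agents 1 and 2 are in the market, with preferences restricted to {g1,g2}), TTC matches agents 1 and 2, and agent 2 receives g1, which she strictly prefers to g2. Hence agent 2 strictly gains by withholding an invitation. -/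

import Mathlib

/-!
Two agents who are each other's strict favourites always trade under TTC: whichever of them
leaves first still sees the other's good, takes it, and drags its owner into the same cycle.
In the full market agents 1 and 3 are such a pair, and injectivity leaves agent 2 with `g2`;
without agent 3, agents 1 and 2 are such a pair, so agent 2 gets `g1`, which she ranks above `g2`.

We model vertices as `Fin 4` with the organizer `o = 0` and agents `1, 2, 3`;
the good `g_i` is identified with its owner `i`.  Preferences are encoded by a
rank function (`rank i g` smaller means agent `i` prefers good `g` more).
-/

/-- `Desc G o i`: the descendants of `i` (including `i`): vertices `v` such that
every path in `G` from the organizer `o` to `v` passes through `i`. -/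
def Desc {V : Type*} (G : SimpleGraph V) (o i : V) : Set V :=
  {v | ∀ p : G.Walk o v, p.IsPath → i ∈ p.support}

/-- `IsTTCOutcome agents avail rank μ` : `μ` is the matching produced by some
execution of the Top Trading Cycle algorithm on the set `agents` (goods being
identified with their owners), where agent `i` may only point to goods in
`avail i`, and `rank i g` is the position of good `g` in `i`'s strict
preference order (smaller = more preferred).  The witness `round i` records
the round in which agent `i`'s cycle is removed: members of one trading cycle
leave in the same round, each agent receives a good she is allowed to point
to, and her good is her most preferred among the goods of agents still
remaining in her round. -/
def IsTTCOutcome {V : Type*} (agents : Set V) (avail : V → Set V)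
    (rank : V → V → ℕ) (μ : V → V) : Prop :=
  ∃ round : V → ℕ,
    Set.MapsTo μ agents agents ∧
    Set.InjOn μ agents ∧
    (∀ i ∈ agents, μ i ∈ avail i) ∧
    (∀ i ∈ agents, round (μ i) = round i) ∧
    (∀ i ∈ agents, ∀ j ∈ agents, j ∈ avail i → round i ≤ round j →
      rank i (μ i) ≤ rank i j)

/-- The line network `o = 0 – 1 – 2 – 3`. -/
def lineG : SimpleGraph (Fin 4) where
  Adj x y := x.val + 1 = y.val ∨ y.val + 1 = x.val
  symm := ⟨by intro x y h; tauto⟩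
  loopless := ⟨by intro x h; omega⟩

/-- Preferences: `g3 ≻₁ g2 ≻₁ g1`, `g1 ≻₂ g3 ≻₂ g2`, `g1 ≻₃ g2 ≻₃ g3`
(the `0`-entries are dummies for the organizer, who owns no good). -/
def rk : Fin 4 → Fin 4 → ℕ :=
  ![![0, 0, 0, 0], ![9, 2, 1, 0], ![9, 0, 2, 1], ![9, 0, 1, 2]]

def IsTopChoice {V : Type*} (agents : Set V) (avail : V → Set V) (rank : V → V → ℕ)
    (i j : V) : Prop :=
  j ∈ agents ∧ j ∈ avail i ∧ ∀ k ∈ agents, k ∈ avail i → k ≠ j → rank i j < rank i k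

namespace IsTTCOutcome

variable {V : Type*} {agents : Set V} {avail : V → Set V} {rank : V → V → ℕ} {μ : V → V}

theorem mutual_top_choices_trade (h : IsTTCOutcome agents avail rank μ) {i j : V}
    (hi : i ∈ agents) (hij : IsTopChoice agents avail rank i j)
    (hji : IsTopChoice agents avail rank j i) : μ i = j ∧ μ j = i := by
  obtain ⟨round, hmap, -, havail, hround, hopt⟩ := h
  have gets_top : ∀ a ∈ agents, ∀ b, IsTopChoice agents avail rank a b →
      round a ≤ round b → μ a = b := by
    intro a ha b ⟨hb, hba, htop⟩ hle
    by_contra hne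
    exact (hopt a ha b hb hba hle).not_gt (htop _ (hmap ha) (havail a ha) hne)
  rcases le_total (round i) (round j) with hle | hle
  · have hμi := gets_top i hi j hij hle
    have hsame : round j = round i := hμi ▸ hround i hi
    exact ⟨hμi, gets_top j hij.1 i hji hsame.le⟩
  · have hμj := gets_top j hij.1 i hji hle
    have hsame : round i = round j := hμj ▸ hround j hij.1
    exact ⟨gets_top i hi j hij hsame.le, hμj⟩

end IsTTCOutcome

theorem lineG_mem_support_of_le_of_le {u w : Fin 4} (p : lineG.Walk u w) {v : Fin 4}
    (hu : u ≤ v) (hw : v ≤ w) : v ∈ p.support := by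
  induction p with
  | nil => simp [le_antisymm hw hu]
  | @cons u x w hadj p ih =>
    rw [SimpleGraph.Walk.support_cons, List.mem_cons]
    by_cases hv : v = u
    · exact .inl hv
    · have hstep : u.val + 1 = x.val ∨ x.val + 1 = u.val := hadj
      have hxv : x ≤ v := by rw [Fin.le_iff_val_le_val] at hu ⊢; omega
      exact .inr (ih hxv hw)

theorem three_mem_desc_two : (3 : Fin 4) ∈ Desc lineG 0 2 :=
  fun p _ => lineG_mem_support_of_le_of_le p (by decide) (by decide)

theorem isTTCOutcome_full_market :
    IsTTCOutcome ({1, 2, 3} : Set (Fin 4)) (fun _ => {1, 2, 3}) rk ![0, 3, 2, 1] :=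
  ⟨![0, 0, 1, 0], by simp [Set.MapsTo, Set.InjOn, rk]⟩

theorem IsTTCOutcome.full_market_eq {μ : Fin 4 → Fin 4}
    (h : IsTTCOutcome ({1, 2, 3} : Set (Fin 4)) (fun _ => {1, 2, 3}) rk μ) :
    μ 1 = 3 ∧ μ 3 = 1 ∧ μ 2 = 2 := by
  obtain ⟨hμ1, hμ3⟩ := h.mutual_top_choices_trade (i := 1) (j := 3) (by simp)
    (by simp [IsTopChoice, rk]) (by simp [IsTopChoice, rk])
  obtain ⟨-, hmap, hinj, -⟩ := h
  refine ⟨hμ1, hμ3, ?_⟩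
  have hμ2 : μ 2 = 1 ∨ μ 2 = 2 ∨ μ 2 = 3 := by simpa using @hmap 2 (by simp)
  rcases hμ2 with hμ2 | hμ2 | hμ2
  · exact absurd (@hinj 2 (by simp) 3 (by simp) (hμ2.trans hμ3.symm)) (by decide)
  · exact hμ2
  · exact absurd (@hinj 2 (by simp) 1 (by simp) (hμ2.trans hμ1.symm)) (by decide)

theorem isTTCOutcome_small_market :
    IsTTCOutcome ({1, 2} : Set (Fin 4)) (fun _ => {1, 2}) rk ![0, 2, 1, 0] :=
  ⟨fun _ => 0, by simp [Set.MapsTo, Set.InjOn, rk]⟩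

theorem IsTTCOutcome.small_market_eq {μ : Fin 4 → Fin 4}
    (h : IsTTCOutcome ({1, 2} : Set (Fin 4)) (fun _ => {1, 2}) rk μ) : μ 1 = 2 ∧ μ 2 = 1 :=
  h.mutual_top_choices_trade (by simp) (by simp [IsTopChoice, rk]) (by simp [IsTopChoice, rk])

/-- TTC in social networks is not invitation-incentive-compatible:
agent `3` is a descendant of agent `2` (so withholding `2`'s invitation removes
`3` from the market); when all of `1,2,3` participate every TTC execution
trades `g1 ↔ g3` and leaves agent `2` with her own good `g2`; when only `1,2`
participate every TTC execution gives agent `2` the good `g1`, which she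
strictly prefers to `g2`.  Hence agent `2` strictly gains by not inviting. -/
theorem ttc_in_networks_not_invitation_IC :
    -- agent 3 can only be reached through agent 2
    (3 : Fin 4) ∈ Desc lineG 0 2 ∧
    -- full market {1,2,3}: TTC outcomes exist, and in each of them
    -- agents 1 and 3 trade while agent 2 keeps her own good
    (∃ μ : Fin 4 → Fin 4,
      IsTTCOutcome ({1, 2, 3} : Set (Fin 4)) (fun _ => {1, 2, 3}) rk μ) ∧
    (∀ μ : Fin 4 → Fin 4,
      IsTTCOutcome ({1, 2, 3} : Set (Fin 4)) (fun _ => {1, 2, 3}) rk μ →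
        μ 1 = 3 ∧ μ 3 = 1 ∧ μ 2 = 2) ∧
    -- market {1,2} (agent 2 does not invite agent 3): TTC outcomes exist,
    -- and in each of them agents 1 and 2 trade, so agent 2 obtains g1
    (∃ μ : Fin 4 → Fin 4,
      IsTTCOutcome ({1, 2} : Set (Fin 4)) (fun _ => {1, 2}) rk μ) ∧
    (∀ μ : Fin 4 → Fin 4,
      IsTTCOutcome ({1, 2} : Set (Fin 4)) (fun _ => {1, 2}) rk μ →
        μ 1 = 2 ∧ μ 2 = 1) ∧
    -- agent 2 strictly prefers g1 to g2
    rk 2 1 < rk 2 2 := by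
  exact ⟨three_mem_desc_two, ⟨_, isTTCOutcome_full_market⟩, fun _ h => h.full_market_eq,
    ⟨_, isTTCOutcome_small_market⟩, fun _ h => h.small_market_eq, by decide⟩
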